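/- Let A, B, C ∈ ℝ³ be the vertices of a nondegenerate triangle and let P_proj be a point in the plane through A, B, C. Define u = (B − A) × (P_proj − A), v = (C − B) × (P_proj − B), w = (A − C) × (P_proj − C). If P_proj lies in the closed triangle (i.e., P_proj = αA + βB + γC with α, β, γ ≥ 0 and α + β + γ = 1), then u·v ≥ 0 and u·w ≥ 0. -/

import Mathlib

open scoped RealInnerProductSpace

/-- Inside-triangle test: if a point `P_proj` of the plane of a nondegenerate triangle
`A B C` lies in the closed triangle (barycentric coordinates `α, β, γ ≥ 0`,
`α + β + γ = 1`), then with `u = (B−A)×(P_proj−A)`, `v = (C−B)×(P_proj−B)`,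
`w = (A−C)×(P_proj−C)` we have `u·v ≥ 0` and `u·w ≥ 0`. -/
theorem check_inside_3d_triangle
    (A B C P_proj : EuclideanSpace ℝ (Fin 3))
    (hABC : AffineIndependent ℝ ![A, B, C])
    (u v w : EuclideanSpace ℝ (Fin 3))
    (hu : u = crossProduct (B - A) (P_proj - A))
    (hv : v = crossProduct (C - B) (P_proj - B))
    (hw : w = crossProduct (A - C) (P_proj - C))
    (α β γ : ℝ) (hα : 0 ≤ α) (hβ : 0 ≤ β) (hγ : 0 ≤ γ)
    (hsum : α + β + γ = 1)
    (hP : P_proj = α • A + β • B + γ • C) :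
    0 ≤ ⟪u, v⟫ ∧ 0 ≤ ⟪u, w⟫ := by
  set N : EuclideanSpace ℝ (Fin 3) := WithLp.toLp 2 (crossProduct (B - A).ofLp (C - A).ofLp) with hN
  have hαv : α = 1 - β - γ := by linarith
  have hu' : u = γ • N := by
    have h1 : P_proj - A = β • (B - A) + γ • (C - A) := by
      rw [hP, hαv]; module
    apply WithLp.ofLp_injective
    rw [hu, ← WithLp.ofLp_sub 2 P_proj A, h1, WithLp.ofLp_add, WithLp.ofLp_smul, WithLp.ofLp_smul,
      map_add, map_smul, map_smul, cross_self, smul_zero, zero_add, hN, WithLp.ofLp_smul,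
      WithLp.ofLp_toLp]
  have hv' : v = α • N := by
    have h1 : P_proj - B = α • (A - B) + γ • (C - B) := by
      rw [hP, hαv]; module
    have h2 : (C - B : EuclideanSpace ℝ (Fin 3)) = (C - A) - (B - A) := by abel
    have h3 : (A - B : EuclideanSpace ℝ (Fin 3)) = -(B - A) := by abel
    apply WithLp.ofLp_injective
    rw [hv, ← WithLp.ofLp_sub 2 P_proj B, h1, WithLp.ofLp_add, WithLp.ofLp_smul, WithLp.ofLp_smul,
      map_add, map_smul, map_smul, cross_self, smul_zero, add_zero,
      h2, h3, WithLp.ofLp_sub 2 (C - A) (B - A), WithLp.ofLp_neg, map_sub, LinearMap.sub_apply,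
      map_neg, map_neg, cross_self, neg_zero,
      cross_anticomm (C - A).ofLp (B - A).ofLp, hN, WithLp.ofLp_smul, WithLp.ofLp_toLp]
    module
  have hw' : w = β • N := by
    have h1 : P_proj - C = α • (A - C) + β • (B - C) := by
      rw [hP, hαv]; module
    have h2 : (A - C : EuclideanSpace ℝ (Fin 3)) = -((C - A)) := by abel
    have h3 : (B - C : EuclideanSpace ℝ (Fin 3)) = (B - A) - (C - A) := by abel
    apply WithLp.ofLp_injective
    rw [hw, ← WithLp.ofLp_sub 2 P_proj C, h1, WithLp.ofLp_add, WithLp.ofLp_smul, WithLp.ofLp_smul,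
      map_add, map_smul, map_smul, cross_self, smul_zero, zero_add,
      h2, h3, WithLp.ofLp_neg, WithLp.ofLp_sub 2 (B - A) (C - A), map_neg, LinearMap.neg_apply,
      map_sub, cross_self, sub_zero,
      cross_anticomm (C - A).ofLp (B - A).ofLp, hN, WithLp.ofLp_smul, WithLp.ofLp_toLp]
  rw [hu', hv', hw']
  constructor
  · rw [real_inner_smul_left, real_inner_smul_right]
    exact mul_nonneg hγ (mul_nonneg hα real_inner_self_nonneg)
  · rw [real_inner_smul_left, real_inner_smul_right]
    exact mul_nonneg hγ (mul_nonneg hβ real_inner_self_nonneg)
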